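/- Let H be a weak bialgebra and A a right H-comodule algebra. The element ε̃ ∈ Hom(H,A) defined by ε̃(h) = 1₍[0]₎ ε(h 1₍[1]₎) is a two-sided unit for the convolution-type product (f # g)(h) = f(h₍₂₎)₍[0]₎ g(h₍₁₎ f(h₍₂₎)₍[1]₎) on Hom̲(H,A) = {f : H → A | f(h) = 1₍[0]₎ f(h1₍[1]₎)}. -/

import Mathlib

open TensorProduct LinearMap

/-- A weak bialgebra over a commutative ring `k`: a `k`-algebra with a
coalgebra structure whose comultiplication is multiplicative, the
compatibility of the counit with multiplication and of the unit with
comultiplication being weakened to the weak bialgebra axioms. -/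
structure WeakBialgebra (k H : Type) [CommRing k] [Ring H] [Algebra k H] where
  comul : H →ₗ[k] H ⊗[k] H
  counit : H →ₗ[k] k
  coassoc : ∀ h, (TensorProduct.assoc k H H H) ((rTensor H comul) (comul h)) =
    (lTensor H comul) (comul h)
  counit_comul : ∀ h, (TensorProduct.lid k H) ((rTensor H counit) (comul h)) = h
  comul_counit : ∀ h, (TensorProduct.rid k H) ((lTensor H counit) (comul h)) = h
  comul_mul : ∀ g h : H, comul (g * h) = comul g * comul h
  /-- `Δ²(1) = (Δ(1)⊗1)(1⊗Δ(1))` -/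
  weak_unit_l : rTensor H comul (comul 1) =
    (comul 1 ⊗ₜ[k] (1 : H)) *
      ((TensorProduct.assoc k H H H).symm ((1 : H) ⊗ₜ[k] comul 1))
  /-- `Δ²(1) = (1⊗Δ(1))(Δ(1)⊗1)` -/
  weak_unit_r : rTensor H comul (comul 1) =
    ((TensorProduct.assoc k H H H).symm ((1 : H) ⊗ₜ[k] comul 1)) *
      (comul 1 ⊗ₜ[k] (1 : H))
  /-- `ε(ghl) = ε(g h₍₁₎) ε(h₍₂₎ l)` -/
  weak_counit_l : ∀ g h l : H, counit (g * h * l) =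
    (LinearMap.mul' k k) ((TensorProduct.map (counit ∘ₗ mulLeft k g)
      (counit ∘ₗ mulRight k l)) (comul h))
  /-- `ε(ghl) = ε(g h₍₂₎) ε(h₍₁₎ l)` -/
  weak_counit_r : ∀ g h l : H, counit (g * h * l) =
    (LinearMap.mul' k k) ((TensorProduct.map (counit ∘ₗ mulRight k l)
      (counit ∘ₗ mulLeft k g)) (comul h))

/-- A right `H`-comodule algebra over a weak bialgebra `H`. -/
structure ComoduleAlgebra (k H A : Type) [CommRing k] [Ring H] [Algebra k H]
    [Ring A] [Algebra k A] (W : WeakBialgebra k H) where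
  rho : A →ₗ[k] A ⊗[k] H
  coassoc : ∀ a, (TensorProduct.assoc k A H H) ((rTensor H rho) (rho a)) =
    (lTensor A W.comul) (rho a)
  counit : ∀ a, (TensorProduct.rid k A) ((lTensor A W.counit) (rho a)) = a
  rho_mul : ∀ a b : A, rho (a * b) = rho a * rho b
  /-- `ρ²(1) = 1₍[0]₎ ⊗ 1₍[1]₎1₍₁₎ ⊗ 1₍₂₎` -/
  weak : rTensor H rho (rho 1) =
    ((rho 1) ⊗ₜ[k] (1 : H)) *
      ((TensorProduct.assoc k A H H).symm ((1 : A) ⊗ₜ[k] W.comul 1))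

variable (k H A : Type) [CommRing k] [Ring H] [Algebra k H] [Ring A] [Algebra k A]
variable (W : WeakBialgebra k H) (R : ComoduleAlgebra k H A W)

/-- `h ↦ 1 ⊗ h`. -/
noncomputable def iH : H →ₗ[k] A ⊗[k] H := TensorProduct.mk k A H 1

/-- The condition defining `Hom̲(H,A) ⊆ Hom(H,A)`:
`f(h) = 1₍[0]₎ f(h 1₍[1]₎)` for all `h`. -/
noncomputable def homCond (f : H →ₗ[k] A) : Prop :=
  ∀ h : H, f h = LinearMap.mul' k A
    ((TensorProduct.map LinearMap.id f) ((iH k H A h) * R.rho 1))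

/-- The product `(f # g)(h) = f(h₍₂₎)₍[0]₎ g(h₍₁₎ f(h₍₂₎)₍[1]₎)`. -/
noncomputable def prodH (f g : H →ₗ[k] A) : H →ₗ[k] A :=
  (TensorProduct.lift (LinearMap.mk₂ k
    (fun h₁ h₂ => LinearMap.mul' k A
      ((TensorProduct.map LinearMap.id g) ((iH k H A h₁) * R.rho (f h₂))))
    (by intro a b c; simp [map_add, add_mul])
    (by intro t a c; simp [map_smul, smul_mul_assoc])
    (by intro a b c; simp [map_add, mul_add])
    (by intro t a c; simp [map_smul, mul_smul_comm]))) ∘ₗ W.comul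

/-- The element `ε̃(h) = 1₍[0]₎ ε(h 1₍[1]₎)` of `Hom(H,A)`. -/
noncomputable def epsTilde : H →ₗ[k] A :=
  (TensorProduct.rid k A).toLinearMap ∘ₗ (lTensor A W.counit) ∘ₗ
    (mulRight k (R.rho 1)) ∘ₗ iH k H A

/-!
Write `ε_t(x) = ε(1₍₁₎x)1₍₂₎` for the target map of `H`. The left unit law only needs
coassociativity of `ρ` and the counit: `ρ(ε̃(y)) = 1₍[0]₎ ⊗ 1₍[1]₎₍₁₎ ε(y 1₍[1]₎₍₂₎)`, so
`(ε̃ # f)(h) = 1₍[0]₎ f(h 1₍[1]₎) = f(h)`.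

The right unit law rests on `ε(g ε_t(x)) = ε(gx)`, a weak counit axiom, and on
`a₍[0]₎ ⊗ ε_t(a₍[1]₎) = 1₍[0]₎a ⊗ 1₍[1]₎`, which turn `(f # ε̃)(h)` into
`1₍[0]₎ f(h₍₂₎) ε(h₍₁₎1₍[1]₎) = 1₍[0]₎ f(h 1₍[1]₎)`. The second identity and the last step use
the mirror image `ρ²(1) = 1₍[0]₎ ⊗ 1₍₁₎1₍[1]₎ ⊗ 1₍₂₎` of the weak comodule axiom; it follows from
`ρ(1) = 1₍[0]₎ ⊗ ε(1₍[1]₎1₍₁₎)1₍₂₎` because `ε(y1₍₁₎)1₍₂₎ ⊗ 1` commutes with `Δ(1)` by the two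
descriptions of `Δ²(1)`.
-/

section General

variable {k H A}

lemma lTensor_mulLeft_apply (x : H) (t : A ⊗[k] H) :
    lTensor A (mulLeft k x) t = ((1 : A) ⊗ₜ[k] x) * t := by
  induction t using TensorProduct.induction_on with
  | zero => simp only [map_zero, mul_zero]
  | tmul a y => simp [Algebra.TensorProduct.tmul_mul_tmul]
  | add u v hu hv => simp only [map_add, mul_add, hu, hv]

lemma lTensor_mul_tmul_one (f : H →ₗ[k] H) (t : A ⊗[k] H) (a : A) :
    lTensor A f (t * (a ⊗ₜ[k] (1 : H))) = lTensor A f t * (a ⊗ₜ[k] (1 : H)) := by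
  induction t using TensorProduct.induction_on with
  | zero => simp only [map_zero, zero_mul]
  | tmul b y => simp only [Algebra.TensorProduct.tmul_mul_tmul, mul_one, lTensor_tmul]
  | add u v hu hv => simp only [map_add, add_mul, hu, hv]

lemma TensorProduct.assoc_mul (x y : (A ⊗[k] H) ⊗[k] H) :
    TensorProduct.assoc k A H H (x * y) =
      TensorProduct.assoc k A H H x * TensorProduct.assoc k A H H y :=
  map_mul (Algebra.TensorProduct.assoc k k k A H H) x y

end General

namespace WeakBialgebra

variable {k H A}

noncomputable def counitLeft (M : Type) [AddCommGroup M] [Module k M] : H ⊗[k] M →ₗ[k] M :=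
  (TensorProduct.lid k M).toLinearMap ∘ₗ rTensor M W.counit

noncomputable def counitRight (M : Type) [AddCommGroup M] [Module k M] : M ⊗[k] H →ₗ[k] M :=
  (TensorProduct.rid k M).toLinearMap ∘ₗ lTensor M W.counit

@[simp] lemma counitLeft_tmul {M : Type} [AddCommGroup M] [Module k M] (x : H) (m : M) :
    W.counitLeft M (x ⊗ₜ[k] m) = W.counit x • m := by
  simp [counitLeft]

@[simp] lemma counitRight_tmul {M : Type} [AddCommGroup M] [Module k M] (m : M) (x : H) :
    W.counitRight M (m ⊗ₜ[k] x) = W.counit x • m := by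
  simp [counitRight]

/-- `ε_t(x) = ε(1₍₁₎x)1₍₂₎`. -/
noncomputable def targetMap : H →ₗ[k] H :=
  W.counitLeft H ∘ₗ mulLeft k (W.comul 1) ∘ₗ (TensorProduct.mk k H H).flip 1

/-- `x ↦ ε(x1₍₁₎)1₍₂₎`, the target map of the opposite algebra. -/
noncomputable def targetMapOp : H →ₗ[k] H :=
  W.counitLeft H ∘ₗ mulRight k (W.comul 1) ∘ₗ (TensorProduct.mk k H H).flip 1

lemma targetMap_apply (x : H) :
    W.targetMap x = W.counitLeft H (W.comul 1 * (x ⊗ₜ[k] (1 : H))) := rfl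

lemma targetMapOp_apply (x : H) :
    W.targetMapOp x = W.counitLeft H ((x ⊗ₜ[k] (1 : H)) * W.comul 1) := rfl

lemma counitLeft_mul_tmul_one (s : H ⊗[k] H) (x : H) :
    W.counitLeft H (s * (x ⊗ₜ[k] (1 : H))) =
      TensorProduct.lid k H (rTensor H (W.counit ∘ₗ mulRight k x) s) := by
  induction s using TensorProduct.induction_on with
  | zero => simp only [zero_mul, map_zero]
  | tmul p q => simp [Algebra.TensorProduct.tmul_mul_tmul]
  | add u v hu hv => simp only [add_mul, map_add, hu, hv]

lemma counit_mul_lid_rTensor (φ : H →ₗ[k] k) (g : H) (s : H ⊗[k] H) :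
    W.counit (g * TensorProduct.lid k H (rTensor H φ s)) =
      LinearMap.mul' k k (TensorProduct.map φ (W.counit ∘ₗ mulLeft k g) s) := by
  induction s using TensorProduct.induction_on with
  | zero => simp only [map_zero, mul_zero]
  | tmul p q => simp
  | add u v hu hv => simp only [map_add, mul_add, hu, hv]

lemma counit_mul_targetMap (g x : H) : W.counit (g * W.targetMap x) = W.counit (g * x) := by
  rw [targetMap_apply, counitLeft_mul_tmul_one, counit_mul_lid_rTensor,
    ← W.weak_counit_r g 1 x, mul_one]

lemma targetMap_eq_of_counit_mul_eq {m₁ m₂ : H}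
    (hm : ∀ u, W.counit (u * m₁) = W.counit (u * m₂)) : W.targetMap m₁ = W.targetMap m₂ := by
  have h : W.counit ∘ₗ mulRight k m₁ = W.counit ∘ₗ mulRight k m₂ := LinearMap.ext hm
  rw [targetMap_apply, targetMap_apply, counitLeft_mul_tmul_one, counitLeft_mul_tmul_one, h]

lemma targetMap_mul (y z : H) :
    W.targetMap (y * z) =
      W.targetMap (TensorProduct.lid k H (rTensor H (W.counit ∘ₗ mulRight k z) (W.comul y))) :=
  W.targetMap_eq_of_counit_mul_eq fun u => by
    rw [counit_mul_lid_rTensor, ← W.weak_counit_r, mul_assoc]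

lemma counitLeft_tmul_mul_assoc_tmul_one_mul (y : H) (s w : H ⊗[k] H) :
    W.counitLeft (H ⊗[k] H) ((y ⊗ₜ[k] (1 : H ⊗[k] H)) *
        TensorProduct.assoc k H H H ((s ⊗ₜ[k] (1 : H)) *
          (TensorProduct.assoc k H H H).symm ((1 : H) ⊗ₜ[k] w))) =
      (W.counitLeft H ((y ⊗ₜ[k] (1 : H)) * s) ⊗ₜ[k] (1 : H)) * w := by
  induction s using TensorProduct.induction_on with
  | zero => simp
  | tmul p q =>
    induction w using TensorProduct.induction_on with
    | zero => simp
    | tmul u v => simp [Algebra.TensorProduct.tmul_mul_tmul, TensorProduct.smul_tmul']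
    | add u v hu hv => simp only [TensorProduct.tmul_add, map_add, mul_add, hu, hv]
  | add u v hu hv => simp only [TensorProduct.add_tmul, add_mul, map_add, mul_add, hu, hv]

lemma counitLeft_tmul_mul_assoc_mul_tmul_one (y : H) (s w : H ⊗[k] H) :
    W.counitLeft (H ⊗[k] H) ((y ⊗ₜ[k] (1 : H ⊗[k] H)) *
        TensorProduct.assoc k H H H ((TensorProduct.assoc k H H H).symm ((1 : H) ⊗ₜ[k] w) *
          (s ⊗ₜ[k] (1 : H)))) =
      w * (W.counitLeft H ((y ⊗ₜ[k] (1 : H)) * s) ⊗ₜ[k] (1 : H)) := by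
  induction s using TensorProduct.induction_on with
  | zero => simp
  | tmul p q =>
    induction w using TensorProduct.induction_on with
    | zero => simp
    | tmul u v => simp [Algebra.TensorProduct.tmul_mul_tmul, TensorProduct.smul_tmul']
    | add u v hu hv => simp only [TensorProduct.tmul_add, map_add, add_mul, mul_add, hu, hv]
  | add u v hu hv => simp only [TensorProduct.add_tmul, mul_add, map_add, hu, hv]

lemma targetMapOp_tmul_one_commute (y : H) :
    (W.targetMapOp y ⊗ₜ[k] (1 : H)) * W.comul 1 = W.comul 1 * (W.targetMapOp y ⊗ₜ[k] (1 : H)) := by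
  rw [targetMapOp_apply, ← counitLeft_tmul_mul_assoc_tmul_one_mul, ← W.weak_unit_l,
    W.weak_unit_r, counitLeft_tmul_mul_assoc_mul_tmul_one]

lemma counitLeft_comp_mulLeft_comul (h : H) :
    W.counitLeft H ∘ₗ mulLeft k (W.comul h) ∘ₗ W.comul = mulLeft k h := by
  ext y
  simp only [comp_apply, mulLeft_apply, ← W.comul_mul]
  exact W.counit_comul (h * y)

lemma counitRight_comp_mulLeft_comul (h : H) :
    W.counitRight H ∘ₗ mulLeft k (W.comul h) ∘ₗ W.comul = mulLeft k h := by
  ext y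
  simp only [comp_apply, mulLeft_apply, ← W.comul_mul]
  exact W.comul_counit (h * y)

lemma lTensor_counitLeft_assoc (u : (A ⊗[k] H) ⊗[k] H) :
    lTensor A (W.counitLeft H) (TensorProduct.assoc k A H H u) =
      rTensor H (W.counitRight A) u := by
  have h : lTensor A (W.counitLeft H) ∘ₗ (TensorProduct.assoc k A H H).toLinearMap =
      rTensor H (W.counitRight A) :=
    TensorProduct.ext_threefold fun a x y => by simp [TensorProduct.smul_tmul']
  exact LinearMap.congr_fun h u

lemma rTensor_counitRight_tmul_one_mul (t : A ⊗[k] H) (w : H ⊗[k] H) :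
    rTensor H (W.counitRight A) ((t ⊗ₜ[k] (1 : H)) *
        (TensorProduct.assoc k A H H).symm ((1 : A) ⊗ₜ[k] w)) =
      lTensor A (W.counitLeft H ∘ₗ mulRight k w ∘ₗ (TensorProduct.mk k H H).flip 1) t := by
  induction t using TensorProduct.induction_on with
  | zero => simp
  | tmul a x =>
    induction w using TensorProduct.induction_on with
    | zero => simp
    | tmul u v => simp [Algebra.TensorProduct.tmul_mul_tmul, TensorProduct.smul_tmul']
    | add u v hu hv => simp_all [mul_add, TensorProduct.tmul_add]
  | add u v hu hv => simp only [TensorProduct.add_tmul, add_mul, map_add, hu, hv]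

lemma lTensor_targetMap_apply (t : A ⊗[k] H) :
    lTensor A W.targetMap t = lTensor A (W.counitLeft H)
      (((1 : A) ⊗ₜ[k] W.comul 1) * TensorProduct.assoc k A H H (t ⊗ₜ[k] (1 : H))) := by
  induction t using TensorProduct.induction_on with
  | zero => simp
  | tmul a y => simp [targetMap_apply, Algebra.TensorProduct.tmul_mul_tmul]
  | add u v hu hv => simp only [map_add, TensorProduct.add_tmul, mul_add, hu, hv]

lemma assoc_lTensor_targetMapOp_tmul_one_commute (t : A ⊗[k] H) :
    TensorProduct.assoc k A H H (lTensor A W.targetMapOp t ⊗ₜ[k] (1 : H)) *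
        ((1 : A) ⊗ₜ[k] W.comul 1) =
      ((1 : A) ⊗ₜ[k] W.comul 1) *
        TensorProduct.assoc k A H H (lTensor A W.targetMapOp t ⊗ₜ[k] (1 : H)) := by
  induction t using TensorProduct.induction_on with
  | zero => simp
  | tmul a y =>
    simp [Algebra.TensorProduct.tmul_mul_tmul, W.targetMapOp_tmul_one_commute]
  | add u v hu hv => simp only [map_add, TensorProduct.add_tmul, mul_add, add_mul, hu, hv]

lemma mul_tmul_lid_rTensor (b c : A) (z : H) (s : H ⊗[k] H) :
    (b * c) ⊗ₜ[k] TensorProduct.lid k H (rTensor H (W.counit ∘ₗ mulRight k z) s) =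
      rTensor H (W.counitRight A)
        ((TensorProduct.assoc k A H H).symm (b ⊗ₜ[k] s) * ((c ⊗ₜ[k] z) ⊗ₜ[k] (1 : H))) := by
  induction s using TensorProduct.induction_on with
  | zero => simp
  | tmul p q => simp [Algebra.TensorProduct.tmul_mul_tmul, TensorProduct.smul_tmul']
  | add u v hu hv => simp only [map_add, TensorProduct.tmul_add, add_mul, hu, hv]

lemma lTensor_targetMap_mul (t t' : A ⊗[k] H) :
    lTensor A W.targetMap (t * t') =
      lTensor A W.targetMap (rTensor H (W.counitRight A)
        ((TensorProduct.assoc k A H H).symm (lTensor A W.comul t) * (t' ⊗ₜ[k] (1 : H)))) := by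
  induction t using TensorProduct.induction_on with
  | zero => simp
  | tmul b y =>
    induction t' using TensorProduct.induction_on with
    | zero => simp
    | tmul c z =>
      rw [Algebra.TensorProduct.tmul_mul_tmul, lTensor_tmul, lTensor_tmul, targetMap_mul,
        ← lTensor_tmul, mul_tmul_lid_rTensor]
    | add u v hu hv => simp only [mul_add, TensorProduct.add_tmul, map_add, hu, hv]
  | add u v hu hv => simp only [add_mul, map_add, hu, hv]

lemma counitRight_tmul_mul (a : A) (y : H) (t : A ⊗[k] H) :
    W.counitRight A ((a ⊗ₜ[k] y) * t) = a * W.counitRight A (((1 : A) ⊗ₜ[k] y) * t) := by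
  induction t using TensorProduct.induction_on with
  | zero => simp
  | tmul c z => simp [Algebra.TensorProduct.tmul_mul_tmul]
  | add u v hu hv => simp [mul_add, hu, hv]

lemma one_tmul_mul_counitRight_assoc_symm (x y : H) (s : A ⊗[k] (H ⊗[k] H)) :
    ((1 : A) ⊗ₜ[k] x) * W.counitRight (A ⊗[k] H)
        (((1 : A ⊗[k] H) ⊗ₜ[k] y) * (TensorProduct.assoc k A H H).symm s) =
      lTensor A (W.counitRight H) (((1 : A) ⊗ₜ[k] (x ⊗ₜ[k] y)) * s) := by
  induction s using TensorProduct.induction_on with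
  | zero => simp
  | tmul a w =>
    induction w using TensorProduct.induction_on with
    | zero => simp
    | tmul p q => simp [Algebra.TensorProduct.tmul_mul_tmul]
    | add u v hu hv => simp_all [TensorProduct.tmul_add, mul_add]
  | add u v hu hv => simp only [map_add, mul_add, hu, hv]

lemma counitRight_one_tmul_mul_lTensor_targetMap (x : H) (t : A ⊗[k] H) :
    W.counitRight A (((1 : A) ⊗ₜ[k] x) * lTensor A W.targetMap t) =
      W.counitRight A (((1 : A) ⊗ₜ[k] x) * t) := by
  induction t using TensorProduct.induction_on with
  | zero => simp
  | tmul a y => simp [Algebra.TensorProduct.tmul_mul_tmul, counit_mul_targetMap]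
  | add u v hu hv => simp only [map_add, mul_add, hu, hv]

lemma counitRight_one_tmul_mul_mul_tmul_one (f : H →ₗ[k] A) (x y : H) (t : A ⊗[k] H) :
    W.counitRight A (((1 : A) ⊗ₜ[k] x) * (t * (f y ⊗ₜ[k] (1 : H)))) =
      LinearMap.mul' k A ((TensorProduct.map LinearMap.id f) (lTensor A (W.counitLeft H)
        (((1 : A) ⊗ₜ[k] (x ⊗ₜ[k] y)) * TensorProduct.assoc k A H H (t ⊗ₜ[k] (1 : H))))) := by
  induction t using TensorProduct.induction_on with
  | zero => simp
  | tmul c m => simp [Algebra.TensorProduct.tmul_mul_tmul]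
  | add u v hu hv => simp only [add_mul, mul_add, map_add, TensorProduct.add_tmul, hu, hv]

end WeakBialgebra

namespace ComoduleAlgebra

variable {k H A W}

@[simp] lemma counitRight_rho (a : A) : W.counitRight A (R.rho a) = a := R.counit a

lemma rho_one_mul (a : A) : R.rho 1 * R.rho a = R.rho a := by rw [← R.rho_mul, one_mul]

lemma rho_mul_rho_one (a : A) : R.rho a * R.rho 1 = R.rho a := by rw [← R.rho_mul, mul_one]

lemma rTensor_rho_rho (a : A) :
    rTensor H R.rho (R.rho a) =
      (TensorProduct.assoc k A H H).symm (lTensor A W.comul (R.rho a)) := by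
  rw [← R.coassoc a, LinearEquiv.symm_apply_apply]

lemma rTensor_counitRight_rTensor_rho (t : A ⊗[k] H) :
    rTensor H (W.counitRight A) (rTensor H R.rho t) = t := by
  rw [← rTensor_comp_apply, show W.counitRight A ∘ₗ R.rho = LinearMap.id from
    LinearMap.ext R.counitRight_rho, rTensor_id, id_apply]

lemma rTensor_counitRight_rTensor_rho_mul (t : A ⊗[k] H) (a : A) :
    rTensor H (W.counitRight A) (rTensor H R.rho t * (R.rho a ⊗ₜ[k] (1 : H))) =
      t * (a ⊗ₜ[k] (1 : H)) := by
  induction t using TensorProduct.induction_on with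
  | zero => simp
  | tmul b y => simp [Algebra.TensorProduct.tmul_mul_tmul, ← R.rho_mul]
  | add u v hu hv => simp only [map_add, add_mul, hu, hv]

lemma lTensor_targetMapOp_rho_one : lTensor A W.targetMapOp (R.rho 1) = R.rho 1 := by
  have h := R.rTensor_counitRight_rTensor_rho (R.rho 1)
  rwa [R.weak, W.rTensor_counitRight_tmul_one_mul] at h

/-- The weak axiom with `Δ(1)` acting from the other side:
`ρ²(1) = 1₍[0]₎ ⊗ 1₍₁₎1₍[1]₎ ⊗ 1₍₂₎`. -/
lemma assoc_rTensor_rho_rho_one :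
    TensorProduct.assoc k A H H (rTensor H R.rho (R.rho 1)) =
      ((1 : A) ⊗ₜ[k] W.comul 1) * TensorProduct.assoc k A H H (R.rho 1 ⊗ₜ[k] (1 : H)) := by
  have hπ := R.lTensor_targetMapOp_rho_one
  calc TensorProduct.assoc k A H H (rTensor H R.rho (R.rho 1))
      = TensorProduct.assoc k A H H (R.rho 1 ⊗ₜ[k] (1 : H)) * ((1 : A) ⊗ₜ[k] W.comul 1) := by
        rw [R.weak, TensorProduct.assoc_mul, LinearEquiv.apply_symm_apply]
    _ = TensorProduct.assoc k A H H (lTensor A W.targetMapOp (R.rho 1) ⊗ₜ[k] (1 : H)) *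
          ((1 : A) ⊗ₜ[k] W.comul 1) := by rw [hπ]
    _ = ((1 : A) ⊗ₜ[k] W.comul 1) *
          TensorProduct.assoc k A H H (lTensor A W.targetMapOp (R.rho 1) ⊗ₜ[k] (1 : H)) :=
        W.assoc_lTensor_targetMapOp_tmul_one_commute _
    _ = _ := by rw [hπ]

lemma lTensor_targetMap_rho_one : lTensor A W.targetMap (R.rho 1) = R.rho 1 := by
  rw [W.lTensor_targetMap_apply, ← assoc_rTensor_rho_rho_one, W.lTensor_counitLeft_assoc,
    rTensor_counitRight_rTensor_rho]

lemma lTensor_targetMap_rho (a : A) :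
    lTensor A W.targetMap (R.rho a) = R.rho 1 * (a ⊗ₜ[k] (1 : H)) := by
  conv_lhs => rw [← R.rho_one_mul a]
  rw [W.lTensor_targetMap_mul, ← rTensor_rho_rho, rTensor_counitRight_rTensor_rho_mul,
    lTensor_mul_tmul_one, lTensor_targetMap_rho_one]

lemma lTensor_counitLeft_tmul_comul_mul (h : H) :
    lTensor A (W.counitLeft H)
        (((1 : A) ⊗ₜ[k] W.comul h) * TensorProduct.assoc k A H H (R.rho 1 ⊗ₜ[k] (1 : H))) =
      ((1 : A) ⊗ₜ[k] h) * R.rho 1 := by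
  have hΔ : ((1 : A) ⊗ₜ[k] W.comul h) =
      ((1 : A) ⊗ₜ[k] W.comul h) * ((1 : A) ⊗ₜ[k] W.comul 1) := by
    rw [Algebra.TensorProduct.tmul_mul_tmul, one_mul, ← W.comul_mul, mul_one]
  rw [hΔ, mul_assoc, ← assoc_rTensor_rho_rho_one, R.coassoc, ← lTensor_mulLeft_apply,
    ← lTensor_comp_apply, ← lTensor_comp_apply, comp_assoc,
    W.counitLeft_comp_mulLeft_comul, lTensor_mulLeft_apply]

/-- `x ⊗ y ↦ f(y)₍[0]₎ g(x f(y)₍[1]₎)`, so that `f # g = R.prodHTensor f g ∘ Δ`. -/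
noncomputable def prodHTensor (f g : H →ₗ[k] A) : H ⊗[k] H →ₗ[k] A :=
  TensorProduct.lift (LinearMap.mk₂ k
    (fun x y => LinearMap.mul' k A
      ((TensorProduct.map LinearMap.id g) (((1 : A) ⊗ₜ[k] x) * R.rho (f y))))
    (fun _ _ _ => by simp [TensorProduct.tmul_add, add_mul])
    (fun _ _ _ => by simp)
    (fun _ _ _ => by simp [mul_add])
    (fun _ _ _ => by simp))

lemma prodH_apply (f g : H →ₗ[k] A) (h : H) :
    prodH k H A W R f g h = R.prodHTensor f g (W.comul h) := rfl

lemma prodHTensor_tmul (f g : H →ₗ[k] A) (x y : H) :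
    R.prodHTensor f g (x ⊗ₜ[k] y) = LinearMap.mul' k A
      ((TensorProduct.map LinearMap.id g) (((1 : A) ⊗ₜ[k] x) * R.rho (f y))) := rfl

lemma epsTilde_apply (y : H) :
    epsTilde k H A W R y = W.counitRight A (((1 : A) ⊗ₜ[k] y) * R.rho 1) := rfl

lemma mul'_map_epsTilde (t : A ⊗[k] H) :
    LinearMap.mul' k A ((TensorProduct.map LinearMap.id (epsTilde k H A W R)) t) =
      W.counitRight A (t * R.rho 1) := by
  induction t using TensorProduct.induction_on with
  | zero => simp
  | tmul a y => rw [map_tmul, mul'_apply, id_apply, epsTilde_apply, ← W.counitRight_tmul_mul]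
  | add u v hu hv => simp [add_mul, hu, hv]

lemma homCond_epsTilde : homCond k H A W R (epsTilde k H A W R) := fun h => by
  rw [mul'_map_epsTilde, iH, mk_apply, mul_assoc, rho_one_mul, epsTilde_apply]

lemma rho_counitRight_one_tmul_mul (y : H) (t : A ⊗[k] H) :
    R.rho (W.counitRight A (((1 : A) ⊗ₜ[k] y) * t)) =
      W.counitRight (A ⊗[k] H) (((1 : A ⊗[k] H) ⊗ₜ[k] y) * rTensor H R.rho t) := by
  induction t using TensorProduct.induction_on with
  | zero => simp
  | tmul c z => simp [Algebra.TensorProduct.tmul_mul_tmul]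
  | add u v hu hv => simp only [mul_add, map_add, hu, hv]

lemma prodHTensor_epsTilde_left (f : H →ₗ[k] A) (z : H ⊗[k] H) :
    R.prodHTensor (epsTilde k H A W R) f z = LinearMap.mul' k A ((TensorProduct.map LinearMap.id f)
      (lTensor A (W.counitRight H) (((1 : A) ⊗ₜ[k] z) * lTensor A W.comul (R.rho 1)))) := by
  induction z using TensorProduct.induction_on with
  | zero => simp
  | tmul x y =>
    rw [prodHTensor_tmul, epsTilde_apply, rho_counitRight_one_tmul_mul, rTensor_rho_rho,
      W.one_tmul_mul_counitRight_assoc_symm]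
  | add u v hu hv => simp only [map_add, TensorProduct.tmul_add, add_mul, hu, hv]

lemma epsTilde_prodH (f : H →ₗ[k] A) (hf : homCond k H A W R f) :
    prodH k H A W R (epsTilde k H A W R) f = f := by
  ext h
  rw [prodH_apply, prodHTensor_epsTilde_left, ← lTensor_mulLeft_apply, ← lTensor_comp_apply,
    ← lTensor_comp_apply, comp_assoc, W.counitRight_comp_mulLeft_comul, lTensor_mulLeft_apply]
  exact (hf h).symm

lemma prodHTensor_epsTilde_right (f : H →ₗ[k] A) (z : H ⊗[k] H) :
    R.prodHTensor f (epsTilde k H A W R) z =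
      LinearMap.mul' k A ((TensorProduct.map LinearMap.id f) (lTensor A (W.counitLeft H)
        (((1 : A) ⊗ₜ[k] z) * TensorProduct.assoc k A H H (R.rho 1 ⊗ₜ[k] (1 : H))))) := by
  induction z using TensorProduct.induction_on with
  | zero => simp
  | tmul x y =>
    rw [prodHTensor_tmul, mul'_map_epsTilde, mul_assoc, rho_mul_rho_one,
      ← W.counitRight_one_tmul_mul_lTensor_targetMap, lTensor_targetMap_rho,
      W.counitRight_one_tmul_mul_mul_tmul_one]
  | add u v hu hv => simp only [map_add, TensorProduct.tmul_add, add_mul, hu, hv]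

lemma prodH_epsTilde (f : H →ₗ[k] A) (hf : homCond k H A W R f) :
    prodH k H A W R f (epsTilde k H A W R) = f := by
  ext h
  rw [prodH_apply, prodHTensor_epsTilde_right, lTensor_counitLeft_tmul_comul_mul]
  exact (hf h).symm

end ComoduleAlgebra

/-- for a weak bialgebra `H` and a right `H`-comodule algebra
`A`, the element `ε̃(h) = 1₍[0]₎ ε(h1₍[1]₎)` lies in `Hom̲(H,A)` and is a
two-sided unit for the product
`(f # g)(h) = f(h₍₂₎)₍[0]₎ g(h₍₁₎ f(h₍₂₎)₍[1]₎)` on `Hom̲(H,A)`. -/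
theorem epsTilde_is_unit :
    homCond k H A W R (epsTilde k H A W R) ∧
    (∀ f : H →ₗ[k] A, homCond k H A W R f →
      prodH k H A W R (epsTilde k H A W R) f = f ∧
      prodH k H A W R f (epsTilde k H A W R) = f) :=
  ⟨R.homCond_epsTilde, fun f hf => ⟨R.epsTilde_prodH f hf, R.prodH_epsTilde f hf⟩⟩
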